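/- arXiv:2511.02585 — 2 statements merged into one kernel-verified Lean document; each statement's English description precedes it below -/
import Mathlib

section
/- For every t ∈ V_m the following two identities hold in R: ξ⁺_1(t)·∏_{1≤r≤m, r odd}(ξ⁺_1(t) − ξ⁺_1(r))·∏_{1≤r≤m, r even}(ξ⁺_1(t) − ξ⁺_1(−r)) = 0 and ξ⁻_1(t)·∏_{1≤r≤m, r odd}(ξ⁻_1(t) − ξ⁻_1(−r))·∏_{1≤r≤m, r even}(ξ⁻_1(t) − ξ⁻_1(r)) = 0; i.e., each of the two degree-two Knutson–Tao classes satisfies a monic polynomial relation of degree m+1 over R. -/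
noncomputable section

open Finset MvPolynomial

/-- The coefficient ring `R = ℚ[α,δ]`, realized as polynomials in two variables. -/
abbrev Rpoly : Type := MvPolynomial (Fin 2) ℚ

/-- The variable `α`. -/
def va : Rpoly := X 0

/-- The variable `δ`. -/
def vd : Rpoly := X 1

/-- `P⁻(a,b) = ∏_{k=a}^{b} (−α + k·δ)`. -/
def Pneg (a b : ℤ) : Rpoly :=
  ∏ k ∈ Finset.Icc a b, (-va + MvPolynomial.C (k : ℚ) * vd)

/-- `P⁺(a,b) = ∏_{k=a}^{b} (α + k·δ)`. -/
def Ppos (a b : ℤ) : Rpoly :=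
  ∏ k ∈ Finset.Icc a b, (va + MvPolynomial.C (k : ℚ) * vd)

/-- Binomial coefficient `C(n,q)` (all uses have `n ≥ 0`). -/
def B (n : ℤ) (q : ℕ) : ℚ := (n.toNat).choose q

/-- The Knutson–Tao class `ξ⁺_q = ξ(m+q, m−q)`, as a function on vertices `t`
(the vertex `t` encodes the pair `(m+t, m−t)`). -/
def xiP (m : ℤ) (q : ℕ) (t : ℤ) : Rpoly :=
  if (q : ℤ) ≤ t ∧ t ≤ m then
    MvPolynomial.C (B (⌈((t : ℚ) - (q : ℚ) + 1) / 2⌉ + q - 1) q) *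
      Pneg (⌈((t : ℚ) - (q : ℚ) + 1) / 2⌉ - 1) (⌈((t : ℚ) - (q : ℚ) + 1) / 2⌉ + q - 2)
  else if -m ≤ t ∧ t ≤ -((q : ℤ) + 1) then
    MvPolynomial.C (B (⌈(-(t : ℚ) - (q : ℚ)) / 2⌉ + q - 1) q) *
      Ppos (⌈(-(t : ℚ) - (q : ℚ)) / 2⌉ + 1) (⌈(-(t : ℚ) - (q : ℚ)) / 2⌉ + q)
  else 0

/-- The Knutson–Tao class `ξ⁻_q = ξ(m−q, m+q)`. -/
def xiM (m : ℤ) (q : ℕ) (t : ℤ) : Rpoly :=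
  if (q : ℤ) + 1 ≤ t ∧ t ≤ m then
    MvPolynomial.C (B (⌈((t : ℚ) - (q : ℚ)) / 2⌉ + q - 1) q) *
      Pneg (⌈((t : ℚ) - (q : ℚ)) / 2⌉) (⌈((t : ℚ) - (q : ℚ)) / 2⌉ + q - 1)
  else if -m ≤ t ∧ t ≤ -(q : ℤ) then
    MvPolynomial.C (B (⌈(-(t : ℚ) - (q : ℚ) + 1) / 2⌉ + q - 1) q) *
      Ppos (⌈(-(t : ℚ) - (q : ℚ) + 1) / 2⌉) (⌈(-(t : ℚ) - (q : ℚ) + 1) / 2⌉ + q - 1)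
  else 0

/-- The weight of the vertex `t`: `w(t) = ((1−2t)/2)·α + (t(t−1)/2)·δ`. -/
def w (t : ℤ) : Rpoly :=
  MvPolynomial.C ((1 - 2 * (t : ℚ)) / 2) * va +
    MvPolynomial.C (((t : ℚ) * ((t : ℚ) - 1)) / 2) * vd

/-!
The classes `ξ^±_1` only see `t` through a ceiling of `t / 2`: `ξ⁺_1` vanishes at `t ∈ {-1, 0}`
and is constant on the blocks `{2k - 1, 2k}` and `{-2k, -2k - 1}`, while `ξ⁻_1` vanishes at
`t ∈ {0, 1}` and is constant on the blocks `{2k, 2k + 1}` and `{-2k + 1, -2k}`. The points at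
which the relation evaluates the class meet every block, so at each vertex either the class
itself or one factor of the product is zero.
-/

lemma mul_prod_sub_mul_prod_sub_eq_zero {ι R : Type*} [CommRing R] {x : R} {f g : ι → R}
    {s u : Finset ι} (h : x = 0 ∨ (∃ i ∈ s, f i = x) ∨ ∃ i ∈ u, g i = x) :
    x * (∏ i ∈ s, (x - f i)) * (∏ i ∈ u, (x - g i)) = 0 := by
  rcases h with rfl | ⟨i, hi, hfi⟩ | ⟨i, hi, hgi⟩
  · rw [zero_mul, zero_mul]
  · rw [prod_eq_zero hi (by rw [hfi, sub_self]), mul_zero, zero_mul]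
  · rw [prod_eq_zero hi (by rw [hgi, sub_self]), mul_zero]

lemma ceil_div_two_of_eq {x : ℚ} (a : ℤ) (h : x = a) : ⌈x / 2⌉ = -(-a / 2) := by
  rw [h]
  exact_mod_cast Rat.ceil_intCast_div_natCast a 2

section

variable (m : ℕ) {t r : ℤ}

lemma xiP_one_eq_zero (h₁ : -1 ≤ t) (h₀ : t ≤ 0) : xiP m 1 t = 0 := by
  unfold xiP
  rw [if_neg (by push_cast; omega), if_neg (by push_cast; omega)]

lemma xiM_one_eq_zero (h₀ : 0 ≤ t) (h₁ : t ≤ 1) : xiM m 1 t = 0 := by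
  unfold xiM
  rw [if_neg (by push_cast; omega), if_neg (by push_cast; omega)]

lemma xiP_one_eq_of_pos (ht : 1 ≤ t) (htm : t ≤ m) (hr : 1 ≤ r) (hrm : r ≤ m)
    (h : (t + 1) / 2 = (r + 1) / 2) : xiP m 1 t = xiP m 1 r := by
  unfold xiP
  rw [if_pos ⟨by push_cast; omega, htm⟩, if_pos ⟨by push_cast; omega, hrm⟩,
    ceil_div_two_of_eq t (by push_cast; ring), ceil_div_two_of_eq r (by push_cast; ring),
    show -(-t / 2) = -(-r / 2) by omega]

lemma xiP_one_eq_of_neg (ht : -m ≤ t) (htm : t ≤ -2) (hr : -m ≤ r) (hrm : r ≤ -2)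
    (h : -t / 2 = -r / 2) : xiP m 1 t = xiP m 1 r := by
  unfold xiP
  rw [if_neg (by push_cast; omega), if_pos ⟨ht, by push_cast; omega⟩,
    if_neg (by push_cast; omega), if_pos ⟨hr, by push_cast; omega⟩,
    ceil_div_two_of_eq (-t - 1) (by push_cast; ring),
    ceil_div_two_of_eq (-r - 1) (by push_cast; ring),
    show -(-(-t - 1) / 2) = -(-(-r - 1) / 2) by omega]

lemma xiM_one_eq_of_pos (ht : 2 ≤ t) (htm : t ≤ m) (hr : 2 ≤ r) (hrm : r ≤ m)
    (h : t / 2 = r / 2) : xiM m 1 t = xiM m 1 r := by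
  unfold xiM
  rw [if_pos ⟨by push_cast; omega, htm⟩, if_pos ⟨by push_cast; omega, hrm⟩,
    ceil_div_two_of_eq (t - 1) (by push_cast; ring),
    ceil_div_two_of_eq (r - 1) (by push_cast; ring),
    show -(-(t - 1) / 2) = -(-(r - 1) / 2) by omega]

lemma xiM_one_eq_of_neg (ht : -m ≤ t) (htm : t ≤ -1) (hr : -m ≤ r) (hrm : r ≤ -1)
    (h : (1 - t) / 2 = (1 - r) / 2) : xiM m 1 t = xiM m 1 r := by
  unfold xiM
  rw [if_neg (by push_cast; omega), if_pos ⟨ht, by push_cast; omega⟩,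
    if_neg (by push_cast; omega), if_pos ⟨hr, by push_cast; omega⟩,
    ceil_div_two_of_eq (-t) (by push_cast; ring), ceil_div_two_of_eq (-r) (by push_cast; ring),
    show -(-(-t) / 2) = -(-(-r) / 2) by omega]

lemma xiP_one_eq_zero_or_exists (ht₁ : -(m : ℤ) ≤ t) (ht₂ : t ≤ m) :
    xiP m 1 t = 0 ∨
      (∃ r ∈ (Icc 1 m).filter (fun r => Odd r), xiP m 1 (r : ℤ) = xiP m 1 t) ∨
      ∃ r ∈ (Icc 1 m).filter (fun r => Even r), xiP m 1 (-(r : ℤ)) = xiP m 1 t := by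
  obtain ⟨n, rfl | rfl⟩ := Int.eq_nat_or_neg t <;> obtain ⟨k, rfl | rfl⟩ := Nat.even_or_odd' n
  · rcases k with _ | k
    · exact .inl (xiP_one_eq_zero m (by omega) (by omega))
    · refine .inr (.inl ⟨2 * k + 1, mem_filter.2 ⟨mem_Icc.2 ⟨by omega, by omega⟩,
        odd_two_mul_add_one k⟩, xiP_one_eq_of_pos m ?_ ?_ ?_ ?_ ?_⟩) <;> omega
  · exact .inr (.inl ⟨2 * k + 1, mem_filter.2 ⟨mem_Icc.2 ⟨by omega, by omega⟩,
      odd_two_mul_add_one k⟩, rfl⟩)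
  · rcases k with _ | k
    · exact .inl (xiP_one_eq_zero m (by omega) (by omega))
    · exact .inr (.inr ⟨2 * (k + 1), mem_filter.2 ⟨mem_Icc.2 ⟨by omega, by omega⟩,
        even_two_mul _⟩, rfl⟩)
  · rcases k with _ | k
    · exact .inl (xiP_one_eq_zero m (by omega) (by omega))
    · refine .inr (.inr ⟨2 * (k + 1), mem_filter.2 ⟨mem_Icc.2 ⟨by omega, by omega⟩,
        even_two_mul _⟩, xiP_one_eq_of_neg m ?_ ?_ ?_ ?_ ?_⟩) <;> omega

lemma xiM_one_eq_zero_or_exists (ht₁ : -(m : ℤ) ≤ t) (ht₂ : t ≤ m) :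
    xiM m 1 t = 0 ∨
      (∃ r ∈ (Icc 1 m).filter (fun r => Odd r), xiM m 1 (-(r : ℤ)) = xiM m 1 t) ∨
      ∃ r ∈ (Icc 1 m).filter (fun r => Even r), xiM m 1 (r : ℤ) = xiM m 1 t := by
  obtain ⟨n, rfl | rfl⟩ := Int.eq_nat_or_neg t <;> obtain ⟨k, rfl | rfl⟩ := Nat.even_or_odd' n
  · rcases k with _ | k
    · exact .inl (xiM_one_eq_zero m (by omega) (by omega))
    · exact .inr (.inr ⟨2 * (k + 1), mem_filter.2 ⟨mem_Icc.2 ⟨by omega, by omega⟩,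
        even_two_mul _⟩, rfl⟩)
  · rcases k with _ | k
    · exact .inl (xiM_one_eq_zero m (by omega) (by omega))
    · refine .inr (.inr ⟨2 * (k + 1), mem_filter.2 ⟨mem_Icc.2 ⟨by omega, by omega⟩,
        even_two_mul _⟩, xiM_one_eq_of_pos m ?_ ?_ ?_ ?_ ?_⟩) <;> omega
  · rcases k with _ | k
    · exact .inl (xiM_one_eq_zero m (by omega) (by omega))
    · refine .inr (.inl ⟨2 * k + 1, mem_filter.2 ⟨mem_Icc.2 ⟨by omega, by omega⟩,
        odd_two_mul_add_one k⟩, xiM_one_eq_of_neg m ?_ ?_ ?_ ?_ ?_⟩) <;> omega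
  · exact .inr (.inl ⟨2 * k + 1, mem_filter.2 ⟨mem_Icc.2 ⟨by omega, by omega⟩,
      odd_two_mul_add_one k⟩, rfl⟩)

end

theorem statement15_general (m : ℕ) (t : ℤ)
    (ht1 : -(m : ℤ) ≤ t) (ht2 : t ≤ (m : ℤ)) :
    xiP m 1 t *
      (∏ r ∈ (Finset.Icc 1 m).filter (fun r => Odd r),
        (xiP m 1 t - xiP m 1 (r : ℤ))) *
      (∏ r ∈ (Finset.Icc 1 m).filter (fun r => Even r),
        (xiP m 1 t - xiP m 1 (-(r : ℤ)))) = 0 ∧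
    xiM m 1 t *
      (∏ r ∈ (Finset.Icc 1 m).filter (fun r => Odd r),
        (xiM m 1 t - xiM m 1 (-(r : ℤ)))) *
      (∏ r ∈ (Finset.Icc 1 m).filter (fun r => Even r),
        (xiM m 1 t - xiM m 1 (r : ℤ))) = 0 :=
  ⟨mul_prod_sub_mul_prod_sub_eq_zero (xiP_one_eq_zero_or_exists m ht1 ht2),
    mul_prod_sub_mul_prod_sub_eq_zero (xiM_one_eq_zero_or_exists m ht1 ht2)⟩

/-- the two degree-two classes satisfy monic polynomial relations of
degree `m+1` over `R`, pointwise on `V_m`. -/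
theorem statement15 (m : ℕ) (hm : 1 ≤ m) (t : ℤ)
    (ht1 : -(m : ℤ) ≤ t) (ht2 : t ≤ (m : ℤ)) :
    xiP m 1 t *
      (∏ r ∈ (Finset.Icc 1 m).filter (fun r => Odd r),
        (xiP m 1 t - xiP m 1 (r : ℤ))) *
      (∏ r ∈ (Finset.Icc 1 m).filter (fun r => Even r),
        (xiP m 1 t - xiP m 1 (-(r : ℤ)))) = 0 ∧
    xiM m 1 t *
      (∏ r ∈ (Finset.Icc 1 m).filter (fun r => Odd r),
        (xiM m 1 t - xiM m 1 (-(r : ℤ)))) *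
      (∏ r ∈ (Finset.Icc 1 m).filter (fun r => Even r),
        (xiM m 1 t - xiM m 1 (r : ℤ))) = 0 :=
  statement15_general m t ht1 ht2
end
end

section
/- Every element f ∈ H_m is an R-linear combination of the Knutson–Tao classes: there exist h₀ ∈ R and h_{q,1}, h_{q,2} ∈ R for 1 ≤ q ≤ m such that f(t) = h₀·ξ⁰(t) + Σ_{q=1}^{m} ( h_{q,1}·ξ⁺_q(t) + h_{q,2}·ξ⁻_q(t) ) for all t ∈ V_m; moreover one can take h₀ = f(0). -/
noncomputable section

open Finset MvPolynomial

/-!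
Every edge `s → t` of `G_m` has `s + t = 2k + 1` for some `k`, and its label is `(s - t)·ℓ_k`
with `ℓ_k = -α + kδ` (`edgeForm k`), so the GKM condition on that edge says that the two values
agree on the line `α = kδ`. On that line `ξ⁺_q(t)` restricts to `c_q(t, k)·δ^q`, where `c_q(t, k)`
is a binomial coefficient times a rising factorial, and `ξ⁻_q(t)` to `c_q(t - 1, k - 1)·δ^q`. The
identities `(b + 1)^{(q)} = q!·C(b + q, q)` and `(-(q + b))^{(q)} = (-1)^q·q!·C(b + q, q)` make
`c_q(·, k)` invariant under `t ↦ 2k + 1 - t`, so every `ξ^±_q` lies in `H_m`.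

Conversely, if `g ∈ H_m` vanishes on `[-n, n]`, then `g(n + 1)` vanishes on the lines of the
`n + 1` distinct labels `ℓ_0, …, ℓ_n` of the edges from `n + 1` into `[-n, n]`, hence is divisible
by their product `P⁻(0, n) = ξ⁺_{n+1}(n + 1)`; likewise `ξ⁻_{n+1}(-(n + 1)) = P⁺(1, n + 1)` divides
`g(-(n + 1))`. Since `ξ^±_{n+1}` vanish on `[-n, n]`, subtracting these multiples extends a
decomposition of `f - f(0)` from `[-n, n]` to `[-(n + 1), n + 1]`.
-/

def edgeForm (k : ℤ) : Rpoly := -va + C (k : ℚ) * vd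

lemma Pneg_eq_prod_edgeForm (a b : ℤ) : Pneg a b = ∏ k ∈ Icc a b, edgeForm k := rfl

def lineRoot (k : ℤ) : MvPolynomial (Fin 1) ℚ := C (k : ℚ) * X 0

/-- Restriction to the line `α = kδ`, after identifying `R` with `ℚ[δ][α]`. -/
def evalLine (k : ℤ) : Rpoly →+* MvPolynomial (Fin 1) ℚ :=
  (Polynomial.evalRingHom (lineRoot k)).comp
    (finSuccEquiv ℚ 1 : Rpoly →+* Polynomial (MvPolynomial (Fin 1) ℚ))

lemma lineRoot_injective : Function.Injective lineRoot := by
  intro a b hab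
  simpa [lineRoot] using congrArg (MvPolynomial.eval fun _ => (1 : ℚ)) hab

lemma finSuccEquiv_C_rat (r : ℚ) :
    finSuccEquiv ℚ 1 (C r) = Polynomial.C (C r) := by
  simpa [MvPolynomial.algebraMap_eq, Polynomial.algebraMap_eq] using (finSuccEquiv ℚ 1).commutes r

lemma finSuccEquiv_vd : finSuccEquiv ℚ 1 vd = Polynomial.C (X 0) :=
  finSuccEquiv_X_succ (j := 0)

lemma finSuccEquiv_edgeForm (k : ℤ) :
    finSuccEquiv ℚ 1 (edgeForm k) = -(Polynomial.X - Polynomial.C (lineRoot k)) := by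
  rw [edgeForm, map_add, map_neg, map_mul, va, finSuccEquiv_X_zero, finSuccEquiv_vd,
    finSuccEquiv_C_rat, lineRoot, Polynomial.C_mul]
  ring

lemma finSuccEquiv_va_add_C_mul_vd (j : ℤ) :
    finSuccEquiv ℚ 1 (va + C (j : ℚ) * vd) = Polynomial.X - Polynomial.C (lineRoot (-j)) := by
  rw [map_add, map_mul, va, finSuccEquiv_X_zero, finSuccEquiv_vd, finSuccEquiv_C_rat, lineRoot,
    Int.cast_neg, map_neg, neg_mul, map_neg, Polynomial.C_mul]
  ring

lemma evalLine_apply (k : ℤ) (p : Rpoly) :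
    evalLine k p = (finSuccEquiv ℚ 1 p).eval (lineRoot k) := rfl

lemma evalLine_C (k : ℤ) (r : ℚ) : evalLine k (C r) = C r := by
  rw [evalLine_apply, finSuccEquiv_C_rat, Polynomial.eval_C]

lemma evalLine_edgeForm (k j : ℤ) : evalLine k (edgeForm j) = C ((j : ℚ) - k) * X 0 := by
  rw [evalLine_apply, finSuccEquiv_edgeForm, Polynomial.eval_neg, Polynomial.eval_sub,
    Polynomial.eval_X, Polynomial.eval_C, lineRoot, lineRoot, map_sub]
  ring

lemma evalLine_va_add_C_mul_vd (k j : ℤ) :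
    evalLine k (va + C (j : ℚ) * vd) = C ((j : ℚ) + k) * X 0 := by
  rw [evalLine_apply, finSuccEquiv_va_add_C_mul_vd, Polynomial.eval_sub, Polynomial.eval_X,
    Polynomial.eval_C, lineRoot, lineRoot, Int.cast_neg, map_neg, map_add]
  ring

lemma prod_X_sub_C_dvd_of_isRoot {A ι : Type*} [CommRing A] [IsDomain A] (s : Finset ι)
    (r : ι → A) (hr : Set.InjOn r s) (p : Polynomial A) (h : ∀ i ∈ s, p.IsRoot (r i)) :
    ∏ i ∈ s, (Polynomial.X - Polynomial.C (r i)) ∣ p := by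
  rcases eq_or_ne p 0 with rfl | hp
  · exact dvd_zero _
  have hle : s.val.map r ≤ p.roots := by
    refine (Multiset.le_iff_subset (s.nodup.map_on hr)).mpr fun a ha => ?_
    obtain ⟨i, hi, rfl⟩ := Multiset.mem_map.mp ha
    exact (Polynomial.mem_roots hp).mpr (h i hi)
  have := (Multiset.prod_X_sub_C_dvd_iff_le_roots hp _).mpr hle
  rwa [Multiset.map_map] at this

lemma prod_va_add_C_mul_vd_dvd {ι : Type*} (s : Finset ι) (κ : ι → ℤ) (hκ : Set.InjOn κ s)
    (p : Rpoly) (h : ∀ i ∈ s, evalLine (-κ i) p = 0) : ∏ i ∈ s, (va + C (κ i : ℚ) * vd) ∣ p := by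
  rw [← map_dvd_iff (finSuccEquiv ℚ 1), map_prod]
  simp only [finSuccEquiv_va_add_C_mul_vd]
  exact prod_X_sub_C_dvd_of_isRoot _ _
    (lineRoot_injective.comp_injOn (neg_injective.comp_injOn hκ)) _ h

lemma Ppos_dvd (a b : ℤ) (p : Rpoly) (h : ∀ j ∈ Icc a b, evalLine (-j) p = 0) :
    Ppos a b ∣ p :=
  prod_va_add_C_mul_vd_dvd _ id (Set.injOn_id _) p h

lemma Pneg_dvd (a b : ℤ) (p : Rpoly) (h : ∀ k ∈ Icc a b, evalLine k p = 0) : Pneg a b ∣ p := by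
  have hassoc : Associated (Pneg a b) (∏ k ∈ Icc a b, (va + C ((-k : ℤ) : ℚ) * vd)) :=
    Associated.prod _ _ _ fun k _ => by
      rw [show -va + C (k : ℚ) * vd = -(va + C ((-k : ℤ) : ℚ) * vd) by
        push_cast; rw [map_neg]; ring]
      exact (Associated.refl _).neg_left
  exact hassoc.dvd_iff_dvd_left.mpr
    (prod_va_add_C_mul_vd_dvd _ _ neg_injective.injOn p fun k hk => by simpa using h k hk)

lemma edgeForm_dvd_of_evalLine_eq_zero (k : ℤ) (p : Rpoly) (h : evalLine k p = 0) :
    edgeForm k ∣ p := by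
  simpa [Pneg_eq_prod_edgeForm] using Pneg_dvd k k p (by simpa using h)

lemma ascPochhammer_eval_intCast_of_eq_add_one (q b : ℕ) (x : ℤ) (hx : x = b + 1) :
    (ascPochhammer ℚ q).eval (x : ℚ) = q.factorial * (b + q).choose q := by
  rw [hx, show ((b : ℤ) + 1 : ℤ) = ((b + 1 : ℕ) : ℤ) by push_cast; rfl, Int.cast_natCast,
    ascPochhammer_nat_eq_natCast_ascFactorial, Nat.ascFactorial_eq_factorial_mul_choose]
  push_cast; rfl

lemma ascPochhammer_eval_intCast_of_eq_neg (q b : ℕ) (x : ℤ) (hx : x = -(q + b)) :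
    (ascPochhammer ℚ q).eval (x : ℚ) = (-1) ^ q * q.factorial * (b + q).choose q := by
  rw [hx, show (-((q : ℤ) + b) : ℤ) = -((q + b : ℕ) : ℤ) by push_cast; rfl, Int.cast_neg,
    Int.cast_natCast, ascPochhammer_eval_neg_eq_descPochhammer,
    descPochhammer_eval_eq_descFactorial,
    Nat.descFactorial_eq_factorial_mul_choose, add_comm q b]
  push_cast; ring

lemma ascPochhammer_eval_intCast_eq_zero (q : ℕ) (x : ℤ) (h1 : 1 - q ≤ x) (h2 : x ≤ 0) :
    (ascPochhammer ℚ q).eval (x : ℚ) = 0 := by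
  rw [ascPochhammer_eval_eq_zero_iff]
  exact ⟨(-x).toNat, by omega,
    by rw [← Int.cast_natCast, Int.toNat_of_nonneg (by omega), Int.cast_neg]⟩

def xiArm (q : ℕ) (t k : ℤ) : ℚ :=
  B ((t - q) / 2 + q) q * (ascPochhammer ℚ q).eval (((t - q) / 2 - k : ℤ) : ℚ)

/-- `evalLine k (ξ⁺_q t) = C (xiCoeff q t k) * δ ^ q`; the arm `t < -q` is the mirror image of the
arm `t ≥ q` under `t ↦ -t - 1`, `k ↦ -k - 2`. -/
def xiCoeff (q : ℕ) (t k : ℤ) : ℚ :=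
  if (q : ℤ) ≤ t then xiArm q t k
  else if t < -q then xiArm q (-t - 1) (-k - 2)
  else 0

lemma B_natCast (n q : ℕ) : B n q = n.choose q := by
  rw [B, Int.toNat_natCast]

lemma xiArm_of_half_eq (q a : ℕ) (t k : ℤ) (ha : (t - q) / 2 = a) :
    xiArm q t k = (a + q).choose q * (ascPochhammer ℚ q).eval (((a : ℤ) - k : ℤ) : ℚ) := by
  rw [xiArm, ha, show (a : ℤ) + q = ((a + q : ℕ) : ℤ) by push_cast; rfl, B_natCast]

lemma xiCoeff_neg_sub_one (q : ℕ) (t k : ℤ) : xiCoeff q (-t - 1) (-k - 2) = xiCoeff q t k := by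
  unfold xiCoeff
  by_cases hpos : (q : ℤ) ≤ t
  · rw [if_neg (by omega), if_pos (by omega), if_pos hpos]
    congr 1 <;> ring
  by_cases hneg : t < -q
  · rw [if_pos (by omega), if_neg hpos, if_pos hneg]
  · rw [if_neg (by omega), if_neg (by omega), if_neg hpos, if_neg hneg]

lemma xiCoeff_eq_of_add_eq_of_le (q : ℕ) (s t k : ℤ) (hs : (q : ℤ) ≤ s)
    (hst : s + t = 2 * k + 1) : xiCoeff q s k = xiCoeff q t k := by
  obtain ⟨a, ha⟩ : ∃ a : ℕ, (s - q) / 2 = a := ⟨((s - q) / 2).toNat, by omega⟩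
  rw [xiCoeff, if_pos hs, xiArm_of_half_eq q a s k ha, xiCoeff]
  split_ifs with htpos htneg
  · obtain ⟨b, hb⟩ : ∃ b : ℕ, (t - q) / 2 = b := ⟨((t - q) / 2).toNat, by omega⟩
    rw [xiArm_of_half_eq q b t k hb, ascPochhammer_eval_intCast_of_eq_neg q b _ (by omega),
      ascPochhammer_eval_intCast_of_eq_neg q a _ (by omega)]
    ring
  · obtain ⟨b, hb⟩ : ∃ b : ℕ, (-t - 1 - q) / 2 = b := ⟨((-t - 1 - q) / 2).toNat, by omega⟩
    rw [xiArm_of_half_eq q b _ _ hb, ascPochhammer_eval_intCast_of_eq_add_one q b _ (by omega),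
      ascPochhammer_eval_intCast_of_eq_add_one q a _ (by omega)]
    ring
  · rw [ascPochhammer_eval_intCast_eq_zero q _ (by omega) (by omega), mul_zero]

/-- `ξ⁺_q` takes the same value on `α = kδ` at both ends of every edge labelled by `ℓ_k`. -/
lemma xiCoeff_eq_of_add_eq (q : ℕ) (s t k : ℤ) (hst : s + t = 2 * k + 1) :
    xiCoeff q s k = xiCoeff q t k := by
  by_cases hs : (q : ℤ) ≤ s
  · exact xiCoeff_eq_of_add_eq_of_le q s t k hs hst
  by_cases ht : (q : ℤ) ≤ t
  · exact (xiCoeff_eq_of_add_eq_of_le q t s k ht (by omega)).symm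
  rw [← xiCoeff_neg_sub_one q s k, ← xiCoeff_neg_sub_one q t k]
  by_cases hs' : s < -q
  · exact xiCoeff_eq_of_add_eq_of_le q _ _ _ (by omega) (by omega)
  by_cases ht' : t < -q
  · exact (xiCoeff_eq_of_add_eq_of_le q _ _ _ (by omega) (by omega)).symm
  rw [xiCoeff_neg_sub_one, xiCoeff_neg_sub_one, xiCoeff, xiCoeff, if_neg hs, if_neg hs', if_neg ht,
    if_neg ht']

lemma prod_Icc_intCast_add_eq_ascPochhammer (a : ℤ) (x : ℚ) (q : ℕ) :
    ∏ j ∈ Icc a (a + q - 1), ((j : ℚ) + x) = (ascPochhammer ℚ q).eval ((a : ℚ) + x) := by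
  induction q with
  | zero => simp
  | succ q ih =>
    have hI : Icc a (a + (q + 1 : ℕ) - 1) = insert (a + q) (Icc a (a + q - 1)) := by
      ext j; simp only [mem_Icc, mem_insert]; omega
    rw [hI, prod_insert (by simp), ih, ascPochhammer_succ_eval]
    push_cast; ring

lemma evalLine_Pneg (k a b : ℤ) (q : ℕ) (hab : b = a + q - 1) :
    evalLine k (Pneg a b) = C ((ascPochhammer ℚ q).eval ((a - k : ℤ) : ℚ)) * X 0 ^ q := by
  rw [Pneg_eq_prod_edgeForm, map_prod]
  simp only [evalLine_edgeForm, prod_mul_distrib, prod_const, ← map_prod]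
  rw [hab, Int.card_Icc, show (a + q - 1 + 1 - a).toNat = q by omega]
  simp_rw [sub_eq_add_neg (G := ℚ)]
  rw [prod_Icc_intCast_add_eq_ascPochhammer]
  push_cast; ring_nf

lemma evalLine_Ppos (k a b : ℤ) (q : ℕ) (hab : b = a + q - 1) :
    evalLine k (Ppos a b) = C ((ascPochhammer ℚ q).eval ((a + k : ℤ) : ℚ)) * X 0 ^ q := by
  rw [Ppos, map_prod]
  simp only [evalLine_va_add_C_mul_vd, prod_mul_distrib, prod_const, ← map_prod]
  rw [hab, Int.card_Icc, show (a + q - 1 + 1 - a).toNat = q by omega,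
    prod_Icc_intCast_add_eq_ascPochhammer]
  push_cast; ring_nf

lemma ceil_div_two (x : ℤ) (y : ℚ) (h : y = x) : ⌈y / 2⌉ = (x + 1) / 2 := by
  rw [h, show (2 : ℚ) = ((2 : ℕ) : ℚ) by norm_num, Rat.ceil_intCast_div_natCast]
  omega

lemma evalLine_xiP (m : ℤ) (q : ℕ) (t k : ℤ) (h1 : -m ≤ t) (h2 : t ≤ m) :
    evalLine k (xiP m q t) = C (xiCoeff q t k) * X 0 ^ q := by
  by_cases hpos : (q : ℤ) ≤ t
  · rw [xiP, if_pos ⟨hpos, h2⟩, xiCoeff, if_pos hpos,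
      ceil_div_two (t - q + 1) _ (by push_cast; ring),
      map_mul, evalLine_C, evalLine_Pneg (q := q) _ _ _ (by omega), xiArm, ← mul_assoc, ← map_mul,
      show (t - q + 1 + 1) / 2 + q - 1 = (t - q) / 2 + q by omega,
      show (t - q + 1 + 1) / 2 - 1 - k = (t - q) / 2 - k by omega]
  by_cases hneg : t < -q
  · rw [xiP, if_neg (by omega), if_pos ⟨h1, by omega⟩, xiCoeff, if_neg hpos, if_pos hneg,
      ceil_div_two (-t - q) _ (by push_cast; ring), map_mul, evalLine_C,
      evalLine_Ppos (q := q) _ _ _ (by omega), xiArm, ← mul_assoc, ← map_mul,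
      show (-t - q + 1) / 2 + q - 1 = (-t - 1 - q) / 2 + q by omega,
      show (-t - q + 1) / 2 + 1 + k = (-t - 1 - q) / 2 - (-k - 2) by omega]
  · rw [xiP, if_neg (by omega), if_neg (by omega), xiCoeff, if_neg hpos, if_neg hneg, map_zero,
      map_zero, zero_mul]

lemma evalLine_xiM (m : ℤ) (q : ℕ) (t k : ℤ) (h1 : -m ≤ t) (h2 : t ≤ m) :
    evalLine k (xiM m q t) = C (xiCoeff q (t - 1) (k - 1)) * X 0 ^ q := by
  by_cases hpos : (q : ℤ) + 1 ≤ t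
  · rw [xiM, if_pos ⟨hpos, h2⟩, xiCoeff, if_pos (by omega),
      ceil_div_two (t - q) _ (by push_cast; ring),
      map_mul, evalLine_C, evalLine_Pneg (q := q) _ _ _ (by omega), xiArm, ← mul_assoc, ← map_mul,
      show (t - q + 1) / 2 + q - 1 = (t - 1 - q) / 2 + q by omega,
      show (t - q + 1) / 2 - k = (t - 1 - q) / 2 - (k - 1) by omega]
  by_cases hneg : t ≤ -q
  · rw [xiM, if_neg (by omega), if_pos ⟨h1, hneg⟩, xiCoeff, if_neg (by omega), if_pos (by omega),
      ceil_div_two (-t - q + 1) _ (by push_cast; ring), map_mul, evalLine_C,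
      evalLine_Ppos (q := q) _ _ _ (by omega), xiArm, ← mul_assoc, ← map_mul,
      show (-t - q + 1 + 1) / 2 + q - 1 = (-(t - 1) - 1 - q) / 2 + q by omega,
      show (-t - q + 1 + 1) / 2 + k = (-(t - 1) - 1 - q) / 2 - (-(k - 1) - 2) by omega]
  · rw [xiM, if_neg (by omega), if_neg (by omega), xiCoeff, if_neg (by omega), if_neg (by omega),
      map_zero, map_zero, zero_mul]

/-- `H_m`, as an `R`-submodule of the functions `ℤ → R` (only the values on `[-m, m]` matter). -/
def gkmSubmodule (m : ℕ) : Submodule Rpoly (ℤ → Rpoly) where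
  carrier := {f | ∀ s t : ℤ, -(m : ℤ) ≤ s → s ≤ (m : ℤ) → -(m : ℤ) ≤ t → t ≤ (m : ℤ) →
    |t| < |s| → Odd (|s| - |t|) → (w s - w t) ∣ (f s - f t)}
  add_mem' {f g} hf hg s t hs₁ hs₂ ht₁ ht₂ hlt hodd := by
    simpa only [Pi.add_apply, add_sub_add_comm] using
      dvd_add (hf s t hs₁ hs₂ ht₁ ht₂ hlt hodd) (hg s t hs₁ hs₂ ht₁ ht₂ hlt hodd)
  zero_mem' _ _ _ _ _ _ _ _ := by simp
  smul_mem' c f hf s t hs₁ hs₂ ht₁ ht₂ hlt hodd := by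
    simpa only [Pi.smul_apply, smul_eq_mul, ← mul_sub] using
      (hf s t hs₁ hs₂ ht₁ ht₂ hlt hodd).mul_left c

lemma const_mem_gkmSubmodule (m : ℕ) (c : Rpoly) : (fun _ => c) ∈ gkmSubmodule m :=
  fun _ _ _ _ _ _ _ _ => by simp

lemma w_sub_w (s t k : ℤ) (hst : s + t = 2 * k + 1) :
    w s - w t = C ((s : ℚ) - t) * edgeForm k := by
  have hk : (s : ℚ) + t = 2 * k + 1 := by exact_mod_cast hst
  have hα : (1 - 2 * (s : ℚ)) / 2 - (1 - 2 * (t : ℚ)) / 2 = -((s : ℚ) - t) := by ring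
  have hδ : (s : ℚ) * (s - 1) / 2 - t * (t - 1) / 2 = (s - t) * k := by
    linear_combination ((s : ℚ) - t) / 2 * hk
  calc w s - w t
      = C ((1 - 2 * (s : ℚ)) / 2 - (1 - 2 * (t : ℚ)) / 2) * va
        + C ((s : ℚ) * (s - 1) / 2 - t * (t - 1) / 2) * vd := by
        rw [w, w, map_sub, map_sub]; ring
    _ = C ((s : ℚ) - t) * edgeForm k := by
        rw [hα, hδ, map_neg, map_mul, edgeForm]; ring

lemma odd_abs_sub_abs_iff {s t : ℤ} : Odd (|s| - |t|) ↔ ∃ k, s + t = 2 * k + 1 := by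
  rw [Int.odd_iff]
  rcases abs_cases s with ⟨hs, _⟩ | ⟨hs, _⟩ <;> rcases abs_cases t with ⟨ht, _⟩ | ⟨ht, _⟩ <;>
    rw [hs, ht] <;> exact ⟨fun _ => ⟨(s + t - 1) / 2, by omega⟩, fun ⟨k, hk⟩ => by omega⟩

lemma mem_gkmSubmodule_of_evalLine_eq (m : ℕ) (f : ℤ → Rpoly)
    (h : ∀ s t k : ℤ, -(m : ℤ) ≤ s → s ≤ m → -(m : ℤ) ≤ t → t ≤ m → s + t = 2 * k + 1 →
      evalLine k (f s) = evalLine k (f t)) :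
    f ∈ gkmSubmodule m := by
  intro s t hs₁ hs₂ ht₁ ht₂ hlt hodd
  obtain ⟨k, hk⟩ := odd_abs_sub_abs_iff.mp hodd
  have hne : (s : ℚ) - t ≠ 0 := by
    rw [sub_ne_zero, Ne, Int.cast_inj]; rintro rfl; exact hlt.false
  rw [w_sub_w s t k hk, ((Ne.isUnit hne).map C).mul_left_dvd]
  exact edgeForm_dvd_of_evalLine_eq_zero k _ (by rw [map_sub, h s t k hs₁ hs₂ ht₁ ht₂ hk, sub_self])

lemma evalLine_eq_of_mem_gkmSubmodule {m : ℕ} {f : ℤ → Rpoly} (hf : f ∈ gkmSubmodule m)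
    {s t k : ℤ} (hs₁ : -(m : ℤ) ≤ s) (hs₂ : s ≤ m) (ht₁ : -(m : ℤ) ≤ t) (ht₂ : t ≤ m)
    (hlt : |t| < |s|) (hst : s + t = 2 * k + 1) :
    evalLine k (f s) = evalLine k (f t) := by
  have hdvd := hf s t hs₁ hs₂ ht₁ ht₂ hlt (odd_abs_sub_abs_iff.mpr ⟨k, hst⟩)
  rw [w_sub_w s t k hst] at hdvd
  obtain ⟨c, hc⟩ := (dvd_mul_left _ _).trans hdvd
  rw [← sub_eq_zero, ← map_sub, hc, map_mul, evalLine_edgeForm, sub_self, map_zero, zero_mul,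
    zero_mul]

lemma xiP_mem_gkmSubmodule (m q : ℕ) : xiP m q ∈ gkmSubmodule m :=
  mem_gkmSubmodule_of_evalLine_eq m _ fun s t k hs₁ hs₂ ht₁ ht₂ hst => by
    rw [evalLine_xiP _ _ _ _ hs₁ hs₂, evalLine_xiP _ _ _ _ ht₁ ht₂,
      xiCoeff_eq_of_add_eq q s t k hst]

lemma xiM_mem_gkmSubmodule (m q : ℕ) : xiM m q ∈ gkmSubmodule m :=
  mem_gkmSubmodule_of_evalLine_eq m _ fun s t k hs₁ hs₂ ht₁ ht₂ hst => by
    rw [evalLine_xiM _ _ _ _ hs₁ hs₂, evalLine_xiM _ _ _ _ ht₁ ht₂,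
      xiCoeff_eq_of_add_eq q (s - 1) (t - 1) (k - 1) (by omega)]

/-- The edges from `q` into `(-q, q)` carry the labels `ℓ_0, …, ℓ_{q-1}`. -/
lemma Pneg_dvd_of_eq_zero {m : ℕ} {g : ℤ → Rpoly} (hg : g ∈ gkmSubmodule m) {q : ℕ} (hq : q ≤ m)
    (h0 : ∀ t : ℤ, -(q : ℤ) < t → t < q → g t = 0) : Pneg 0 (q - 1) ∣ g q :=
  Pneg_dvd _ _ _ fun k hk => by
    rw [mem_Icc] at hk
    have hlt : |2 * k - (q - 1)| < |(q : ℤ)| := by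
      rw [abs_of_nonneg (by omega : (0 : ℤ) ≤ q)]; exact abs_lt.mpr ⟨by omega, by omega⟩
    rw [evalLine_eq_of_mem_gkmSubmodule hg (by omega) (by omega) (by omega) (by omega) hlt
      (by omega), h0 _ (by omega) (by omega), map_zero]

/-- The edges from `-q` into `(-q, q)` carry the labels `ℓ_{-1}, …, ℓ_{-q}`, and
`ℓ_{-j} = -(α + jδ)`. -/
lemma Ppos_dvd_of_eq_zero {m : ℕ} {g : ℤ → Rpoly} (hg : g ∈ gkmSubmodule m) {q : ℕ} (hq : q ≤ m)
    (h0 : ∀ t : ℤ, -(q : ℤ) < t → t < q → g t = 0) : Ppos 1 q ∣ g (-q) :=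
  Ppos_dvd _ _ _ fun j hj => by
    rw [mem_Icc] at hj
    have hlt : |(q : ℤ) + 1 - 2 * j| < |-(q : ℤ)| := by
      rw [abs_neg, abs_of_nonneg (by omega : (0 : ℤ) ≤ q)]; exact abs_lt.mpr ⟨by omega, by omega⟩
    rw [evalLine_eq_of_mem_gkmSubmodule hg (by omega) (by omega) (by omega) (by omega) hlt
      (by omega), h0 _ (by omega) (by omega), map_zero]

lemma xiP_eq_zero (m : ℤ) (q : ℕ) (t : ℤ) (h₁ : -(q : ℤ) ≤ t) (h₂ : t < q) : xiP m q t = 0 := by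
  rw [xiP, if_neg (by omega), if_neg (by omega)]

lemma xiM_eq_zero (m : ℤ) (q : ℕ) (t : ℤ) (h₁ : -(q : ℤ) < t) (h₂ : t ≤ q) : xiM m q t = 0 := by
  rw [xiM, if_neg (by omega), if_neg (by omega)]

lemma xiP_self (m : ℤ) (q : ℕ) (hq : (q : ℤ) ≤ m) : xiP m q q = Pneg 0 (q - 1) := by
  rw [xiP, if_pos ⟨le_rfl, hq⟩, ceil_div_two 1 _ (by push_cast; ring),
    show (1 + 1) / 2 + (q : ℤ) - 1 = q by omega, B_natCast, Nat.choose_self,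
    show (1 + 1 : ℤ) / 2 - 1 = 0 by norm_num, show (1 + 1) / 2 + (q : ℤ) - 2 = q - 1 by omega]
  simp

lemma xiM_neg_self (m : ℤ) (q : ℕ) (hq : -m ≤ -(q : ℤ)) : xiM m q (-q) = Ppos 1 q := by
  rw [xiM, if_neg (by omega), if_pos ⟨hq, le_rfl⟩, ceil_div_two 1 _ (by push_cast; ring),
    show (1 + 1) / 2 + (q : ℤ) - 1 = q by omega, B_natCast, Nat.choose_self,
    show (1 + 1 : ℤ) / 2 = 1 by norm_num]
  simp

def xiSum (m n : ℕ) (h₁ h₂ : ℕ → Rpoly) (t : ℤ) : Rpoly :=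
  ∑ q ∈ Icc 1 n, (h₁ q * xiP m q t + h₂ q * xiM m q t)

lemma xiSum_mem_gkmSubmodule (m n : ℕ) (h₁ h₂ : ℕ → Rpoly) :
    xiSum m n h₁ h₂ ∈ gkmSubmodule m := by
  have hsum : xiSum m n h₁ h₂ = ∑ q ∈ Icc 1 n, (h₁ q • xiP m q + h₂ q • xiM m q) := by
    ext t; simp [xiSum, Finset.sum_apply]
  rw [hsum]
  exact Submodule.sum_mem _ fun q _ => add_mem (Submodule.smul_mem _ _ (xiP_mem_gkmSubmodule m q))
    (Submodule.smul_mem _ _ (xiM_mem_gkmSubmodule m q))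

lemma xiSum_succ_update (m n : ℕ) (h₁ h₂ : ℕ → Rpoly) (c₁ c₂ : Rpoly) (t : ℤ) :
    xiSum m (n + 1) (Function.update h₁ (n + 1) c₁) (Function.update h₂ (n + 1) c₂) t =
      xiSum m n h₁ h₂ t + (c₁ * xiP m (n + 1) t + c₂ * xiM m (n + 1) t) := by
  rw [xiSum, sum_Icc_succ_top (by omega), Function.update_self, Function.update_self]
  congr 1
  refine sum_congr rfl fun q hq => ?_
  rw [mem_Icc] at hq
  rw [Function.update_of_ne (by omega), Function.update_of_ne (by omega)]

lemma exists_xiSum_eq_succ {m : ℕ} {f : ℤ → Rpoly} (hf : f ∈ gkmSubmodule m) {n : ℕ}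
    (hn : n + 1 ≤ m) (h₁ h₂ : ℕ → Rpoly)
    (hrep : ∀ t : ℤ, -(n : ℤ) ≤ t → t ≤ n → f t = f 0 + xiSum m n h₁ h₂ t) :
    ∃ h₁' h₂' : ℕ → Rpoly, ∀ t : ℤ, -((n + 1 : ℕ) : ℤ) ≤ t → t ≤ (n + 1 : ℕ) →
      f t = f 0 + xiSum m (n + 1) h₁' h₂' t := by
  let g : ℤ → Rpoly := fun t => f t - f 0 - xiSum m n h₁ h₂ t
  have hg : g ∈ gkmSubmodule m :=
    sub_mem (sub_mem hf (const_mem_gkmSubmodule m _)) (xiSum_mem_gkmSubmodule m n h₁ h₂)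
  have hg₀ : ∀ t : ℤ, -((n + 1 : ℕ) : ℤ) < t → t < (n + 1 : ℕ) → g t = 0 := fun t ht₁ ht₂ => by
    show f t - f 0 - xiSum m n h₁ h₂ t = 0
    rw [hrep t (by omega) (by omega)]; ring
  obtain ⟨c₁, hc₁⟩ := Pneg_dvd_of_eq_zero hg hn hg₀
  obtain ⟨c₂, hc₂⟩ := Ppos_dvd_of_eq_zero hg hn hg₀
  refine ⟨Function.update h₁ (n + 1) c₁, Function.update h₂ (n + 1) c₂, fun t ht₁ ht₂ => ?_⟩
  rw [xiSum_succ_update]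
  rcases lt_trichotomy t (n + 1 : ℕ) with ht | rfl | ht
  · rcases lt_or_eq_of_le ht₁ with ht' | rfl
    · rw [xiP_eq_zero _ _ _ (by omega) ht, xiM_eq_zero _ _ _ ht' ht.le,
        hrep t (by omega) (by omega)]
      ring
    · rw [xiP_eq_zero _ _ _ le_rfl (by omega), xiM_neg_self _ _ (by omega)]
      linear_combination hc₂
  · rw [xiP_self _ _ (by omega), xiM_eq_zero _ _ _ (by omega) le_rfl]
    linear_combination hc₁
  · omega

lemma exists_xiSum_eq {m : ℕ} {f : ℤ → Rpoly} (hf : f ∈ gkmSubmodule m) :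
    ∀ n ≤ m, ∃ h₁ h₂ : ℕ → Rpoly, ∀ t : ℤ, -(n : ℤ) ≤ t → t ≤ n →
      f t = f 0 + xiSum m n h₁ h₂ t
  | 0, _ => ⟨0, 0, fun t ht₁ ht₂ => by
      obtain rfl : t = 0 := by omega
      simp [xiSum]⟩
  | n + 1, hn => by
      obtain ⟨h₁, h₂, hrep⟩ := exists_xiSum_eq hf n (by omega)
      exact exists_xiSum_eq_succ hf hn h₁ h₂ hrep

theorem statement17_general (m : ℕ) (f : ℤ → Rpoly)
    (hf : ∀ s t : ℤ, -(m : ℤ) ≤ s → s ≤ (m : ℤ) → -(m : ℤ) ≤ t → t ≤ (m : ℤ) →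
      |t| < |s| → Odd (|s| - |t|) → (w s - w t) ∣ (f s - f t)) :
    ∃ (h0 : Rpoly) (h1 h2 : ℕ → Rpoly), h0 = f 0 ∧
      ∀ t : ℤ, -(m : ℤ) ≤ t → t ≤ (m : ℤ) →
        f t = h0 + ∑ q ∈ Finset.Icc 1 m, (h1 q * xiP m q t + h2 q * xiM m q t) := by
  obtain ⟨h1, h2, hrep⟩ := exists_xiSum_eq (f := f) hf m le_rfl
  exact ⟨f 0, h1, h2, rfl, hrep⟩

/-- every `f ∈ H_m` is an `R`-linear combination of the Knutson–Tao
classes, with `h₀ = f(0)`. -/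
theorem statement17 (m : ℕ) (hm : 1 ≤ m) (f : ℤ → Rpoly)
    (hf : ∀ s t : ℤ, -(m : ℤ) ≤ s → s ≤ (m : ℤ) → -(m : ℤ) ≤ t → t ≤ (m : ℤ) →
      |t| < |s| → Odd (|s| - |t|) → (w s - w t) ∣ (f s - f t)) :
    ∃ (h0 : Rpoly) (h1 h2 : ℕ → Rpoly), h0 = f 0 ∧
      ∀ t : ℤ, -(m : ℤ) ≤ t → t ≤ (m : ℤ) →
        f t = h0 + ∑ q ∈ Finset.Icc 1 m, (h1 q * xiP m q t + h2 q * xiM m q t) :=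
  statement17_general m f hf
end
end
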